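/- Let D be a bounded domain in ℂⁿ and f: D → D holomorphic such that f(D) is relatively compact in D. Then there exists a constant k < 1 such that f is k-Lipschitz for the integrated Carathéodory distance c^i_D; consequently f has a unique fixed point a ∈ D, and for every z₀ ∈ D the iterates fⁿ(z₀) converge to a. -/

import Mathlib

open Complex Metric Set Filter

/-- The infinitesimal Carathéodory metric of a domain `D`. -/
noncomputable def caratheodoryMetric {E : Type*} [NormedAddCommGroup E] [NormedSpace ℂ E]
    (D : Set E) (z : E) (v : E) : ℝ :=
  sSup {c : ℝ | ∃ φ : E → ℂ, DifferentiableOn ℂ φ D ∧ MapsTo φ D (ball 0 1) ∧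
    c = ‖fderiv ℂ φ z v‖ / (1 - (‖φ z‖)^2)}

/-- The integrated Carathéodory distance of a domain `D`. -/
noncomputable def caratheodoryIntDist {E : Type*} [NormedAddCommGroup E] [NormedSpace ℂ E]
    (D : Set E) (z w : E) : ℝ :=
  sInf {L : ℝ | ∃ γ : ℝ → E, ContDiffOn ℝ 1 γ (Icc 0 1) ∧
    MapsTo γ (Icc 0 1) D ∧ γ 0 = z ∧ γ 1 = w ∧
    L = ∫ t in (0:ℝ)..1, caratheodoryMetric D (γ t) (deriv γ t)}

/-!
Write `E` for the Carathéodory metric and `c` for its integrated distance. Applied to linear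
functionals, the definition of `E` gives `‖v‖ ≤ R E(z, v)` when `D` lies in balls of radius `R`
around its points, so `‖w - z‖ ≤ R c(z, w)`; the Schwarz–Pick lemma bounds `E` locally from above,
which makes `E` integrable along `C¹` paths. Since `f(D)` keeps a distance `ε` from `∂D`, the map
`f + (ε / R) (f - f z)` is again a holomorphic self-map of `D`, and the decrease of `E` under it
gives `E(f z, f'(z) v) ≤ k E(z, v)` with `k = (1 + ε / R)⁻¹ < 1`; integrating along paths,
`c(f z, f w) ≤ k c(z, w)`. The iterates of `f` are then Cauchy for `c`, hence in norm, and their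
limit is the unique fixed point.
-/

open MeasureTheory Topology ComplexConjugate Interval

noncomputable def blaschkeFactor (a w : ℂ) : ℂ := (w - a) / (1 - conj a * w)

section BlaschkeFactor

variable {a w : ℂ}

theorem one_sub_conj_mul_ne_zero (ha : ‖a‖ < 1) (hw : ‖w‖ < 1) : 1 - conj a * w ≠ 0 := by
  have : ‖conj a * w‖ < 1 := by
    rw [norm_mul, Complex.norm_conj]
    nlinarith [norm_nonneg a, norm_nonneg w]
  intro h
  rw [← sub_eq_zero.1 h, norm_one] at this
  exact this.false

theorem normSq_one_sub_conj_mul_sub_normSq_sub (a w : ℂ) :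
    normSq (1 - conj a * w) - normSq (w - a) = (1 - normSq a) * (1 - normSq w) := by
  simp only [normSq_apply, sub_re, sub_im, mul_re, mul_im, conj_re, conj_im, one_re, one_im]
  ring

theorem norm_blaschkeFactor_lt_one (ha : ‖a‖ < 1) (hw : ‖w‖ < 1) : ‖blaschkeFactor a w‖ < 1 := by
  have hden : 0 < normSq (1 - conj a * w) := normSq_pos.2 (one_sub_conj_mul_ne_zero ha hw)
  have ha' : normSq a < 1 := by rw [← Complex.sq_norm]; nlinarith [norm_nonneg a]
  have hw' : normSq w < 1 := by rw [← Complex.sq_norm]; nlinarith [norm_nonneg w]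
  have hlt : normSq (w - a) < normSq (1 - conj a * w) := by
    nlinarith [normSq_one_sub_conj_mul_sub_normSq_sub a w, mul_pos (sub_pos.2 ha') (sub_pos.2 hw')]
  rw [← sq_lt_one_iff₀ (norm_nonneg _), blaschkeFactor, norm_div, div_pow, Complex.sq_norm,
    Complex.sq_norm, div_lt_one hden]
  exact hlt

@[simp]
theorem blaschkeFactor_self (a : ℂ) : blaschkeFactor a a = 0 := by simp [blaschkeFactor]

theorem differentiableAt_blaschkeFactor (ha : ‖a‖ < 1) (hw : ‖w‖ < 1) :
    DifferentiableAt ℂ (blaschkeFactor a) w :=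
  (differentiableAt_id.sub_const a).div ((differentiableAt_id.const_mul _).const_sub 1)
    (one_sub_conj_mul_ne_zero ha hw)

theorem hasDerivAt_blaschkeFactor_self (ha : ‖a‖ < 1) :
    HasDerivAt (blaschkeFactor a) ((1 - normSq a : ℂ)⁻¹) a := by
  have hden := one_sub_conj_mul_ne_zero ha ha
  have hconj : conj a * a = normSq a := by rw [mul_comm, mul_conj]
  have h1 : HasDerivAt (fun w : ℂ => w - a) 1 a := (hasDerivAt_id a).sub_const a
  have h2 : HasDerivAt (fun w : ℂ => 1 - conj a * w) (-conj a) a := by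
    simpa using ((hasDerivAt_id a).const_mul (conj a)).const_sub 1
  refine (h1.div h2 hden).congr_deriv ?_
  rw [hconj] at hden ⊢
  field_simp
  ring

end BlaschkeFactor

theorem one_sub_sq_norm_pos_of_mapsTo {X : Type*} {D : Set X} {φ : X → ℂ}
    (hφ : MapsTo φ D (ball 0 1)) {z : X} (hz : z ∈ D) : 0 < 1 - ‖φ z‖ ^ 2 := by
  have := mem_ball_zero_iff.1 (hφ hz)
  nlinarith [norm_nonneg (φ z)]

section CaratheodoryMetric

variable {F : Type*} [NormedAddCommGroup F] [NormedSpace ℂ F] {D : Set F} {z v : F}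

def caratheodoryFamily (D : Set F) : Set (F → ℂ) :=
  {φ | DifferentiableOn ℂ φ D ∧ MapsTo φ D (ball 0 1)}

instance (D : Set F) : Nonempty (caratheodoryFamily D) :=
  ⟨⟨0, differentiableOn_const 0, fun _ _ => mem_ball_self one_pos⟩⟩

theorem caratheodoryMetric_eq_iSup (D : Set F) (z v : F) :
    caratheodoryMetric D z v =
      ⨆ φ : caratheodoryFamily D, ‖fderiv ℂ φ.1 z v‖ / (1 - ‖φ.1 z‖ ^ 2) := by
  rw [caratheodoryMetric, iSup]
  congr 1
  ext c
  simp only [mem_ofPred_eq, mem_range, Subtype.exists, caratheodoryFamily]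
  grind

theorem norm_fderiv_apply_div_le_of_ball_subset {φ : F → ℂ} (hφ : φ ∈ caratheodoryFamily D)
    {ρ : ℝ} (hρ : 0 < ρ) (hball : ball z ρ ⊆ D) :
    ‖fderiv ℂ φ z v‖ / (1 - ‖φ z‖ ^ 2) ≤ ‖v‖ / ρ := by
  obtain ⟨hφd, hφD⟩ := hφ
  have hz : z ∈ D := hball (mem_ball_self hρ)
  have hφz : ‖φ z‖ < 1 := mem_ball_zero_iff.1 (hφD hz)
  have hφdisc : ∀ u ∈ D, ‖φ u‖ < 1 := fun u hu => mem_ball_zero_iff.1 (hφD hu)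
  -- Schwarz–Pick: compose with the Blaschke factor moving `φ z` to `0`, then apply Schwarz
  set ψ := blaschkeFactor (φ z) ∘ φ
  have hψd : DifferentiableOn ℂ ψ (ball z ρ) := fun u hu =>
    ((differentiableAt_blaschkeFactor hφz (hφdisc u (hball hu))).comp u
      ((hφd u (hball hu)).differentiableAt
        (mem_of_superset (isOpen_ball.mem_nhds hu) hball))).differentiableWithinAt
  have hψball : MapsTo ψ (ball z ρ) (closedBall (ψ z) 1) := fun u hu => by
    simpa [ψ] using (norm_blaschkeFactor_lt_one hφz (hφdisc u (hball hu))).le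
  have hψder : HasFDerivAt ψ ((1 - normSq (φ z) : ℂ)⁻¹ • fderiv ℂ φ z) z :=
    (hasDerivAt_blaschkeFactor_self hφz).comp_hasFDerivAt z
      ((hφd z hz).differentiableAt
        (mem_of_superset (isOpen_ball.mem_nhds (mem_ball_self hρ)) hball)).hasFDerivAt
  have hnorm : ‖((1 - normSq (φ z) : ℂ)⁻¹)‖ = (1 - ‖φ z‖ ^ 2)⁻¹ := by
    rw [← Complex.sq_norm, ← ofReal_one, ← ofReal_sub, norm_inv, norm_real, Real.norm_eq_abs,
      abs_of_pos (one_sub_sq_norm_pos_of_mapsTo hφD hz)]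
  calc ‖fderiv ℂ φ z v‖ / (1 - ‖φ z‖ ^ 2) = ‖fderiv ℂ ψ z v‖ := by
        rw [hψder.fderiv, smul_apply, norm_smul, hnorm, div_eq_inv_mul]
    _ ≤ ‖fderiv ℂ ψ z‖ * ‖v‖ := (fderiv ℂ ψ z).le_opNorm v
    _ ≤ 1 / ρ * ‖v‖ := by
        gcongr; exact Complex.norm_fderiv_le_div_of_mapsTo_ball hψd hψball hρ
    _ = ‖v‖ / ρ := by ring

theorem bddAbove_range_caratheodoryFamily (hD : IsOpen D) (hz : z ∈ D) (v : F) :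
    BddAbove (range fun φ : caratheodoryFamily D =>
      ‖fderiv ℂ φ.1 z v‖ / (1 - ‖φ.1 z‖ ^ 2)) := by
  obtain ⟨ρ, hρ, hball⟩ := Metric.isOpen_iff.1 hD z hz
  exact ⟨‖v‖ / ρ,
    forall_mem_range.2 fun φ => norm_fderiv_apply_div_le_of_ball_subset φ.2 hρ hball⟩

theorem le_caratheodoryMetric (hD : IsOpen D) (hz : z ∈ D) {φ : F → ℂ}
    (hφ : φ ∈ caratheodoryFamily D) (v : F) :
    ‖fderiv ℂ φ z v‖ / (1 - ‖φ z‖ ^ 2) ≤ caratheodoryMetric D z v := by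
  rw [caratheodoryMetric_eq_iSup]
  exact le_ciSup (f := fun φ : caratheodoryFamily D => _)
    (bddAbove_range_caratheodoryFamily hD hz v) ⟨φ, hφ⟩

theorem caratheodoryMetric_le_of_ball_subset {ρ : ℝ} (hρ : 0 < ρ) (hball : ball z ρ ⊆ D)
    (v : F) : caratheodoryMetric D z v ≤ ‖v‖ / ρ := by
  rw [caratheodoryMetric_eq_iSup]
  exact ciSup_le fun φ => norm_fderiv_apply_div_le_of_ball_subset φ.2 hρ hball

theorem caratheodoryMetric_nonneg (hz : z ∈ D) (v : F) : 0 ≤ caratheodoryMetric D z v := by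
  rw [caratheodoryMetric_eq_iSup]
  exact Real.iSup_nonneg fun φ =>
    div_nonneg (norm_nonneg _) (one_sub_sq_norm_pos_of_mapsTo φ.2.2 hz).le

theorem caratheodoryMetric_smul (D : Set F) (z : F) (a : ℂ) (v : F) :
    caratheodoryMetric D z (a • v) = ‖a‖ * caratheodoryMetric D z v := by
  simp only [caratheodoryMetric_eq_iSup, map_smul, norm_smul, mul_div_assoc,
    Real.mul_iSup_of_nonneg (norm_nonneg a)]

theorem caratheodoryMetric_fderiv_le (hD : IsOpen D) {g : F → F} (hg : DifferentiableOn ℂ g D)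
    (hgD : MapsTo g D D) (hz : z ∈ D) (v : F) :
    caratheodoryMetric D (g z) (fderiv ℂ g z v) ≤ caratheodoryMetric D z v := by
  rw [caratheodoryMetric_eq_iSup D (g z)]
  refine ciSup_le fun φ => ?_
  have hcomp : fderiv ℂ (φ.1 ∘ g) z = (fderiv ℂ φ (g z)).comp (fderiv ℂ g z) :=
    fderiv_comp z ((φ.2.1 _ (hgD hz)).differentiableAt (hD.mem_nhds (hgD hz)))
      ((hg z hz).differentiableAt (hD.mem_nhds hz))
  simpa [hcomp] using le_caratheodoryMetric hD hz ⟨φ.2.1.comp hg hgD, φ.2.2.comp hgD⟩ v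

theorem norm_le_mul_caratheodoryMetric (hD : IsOpen D) (hz : z ∈ D) {R : ℝ}
    (hR : D ⊆ ball z R) (v : F) : ‖v‖ ≤ R * caratheodoryMetric D z v := by
  have hR0 : 0 < R := pos_of_mem_ball (hR hz)
  rcases eq_or_ne v 0 with rfl | hv
  · simpa using mul_nonneg hR0.le (caratheodoryMetric_nonneg hz 0)
  obtain ⟨ℓ, hℓ1, hℓv⟩ := exists_dual_vector ℂ v (norm_ne_zero_iff.2 hv)
  set φ : F → ℂ := fun u => (R : ℂ)⁻¹ * ℓ (u - z)
  have hφder : HasFDerivAt φ ((R : ℂ)⁻¹ • ℓ) z := by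
    simpa [φ] using (ℓ.hasFDerivAt.comp z ((hasFDerivAt_id z).sub_const z)).const_mul (R : ℂ)⁻¹
  have hφD : MapsTo φ D (ball 0 1) := fun u hu => by
    have hℓu : ‖ℓ (u - z)‖ < R := calc
      ‖ℓ (u - z)‖ ≤ ‖ℓ‖ * ‖u - z‖ := ℓ.le_opNorm _
      _ < R := by rw [hℓ1, one_mul, ← dist_eq_norm]; exact hR hu
    rw [mem_ball_zero_iff, norm_mul, norm_inv, norm_real, Real.norm_of_nonneg hR0.le]
    exact (inv_mul_lt_one₀ hR0).2 hℓu
  have hφ : φ ∈ caratheodoryFamily D :=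
    ⟨((ℓ.differentiable.comp (differentiable_id.sub_const z)).const_mul _).differentiableOn, hφD⟩
  have hval : ‖fderiv ℂ φ z v‖ / (1 - ‖φ z‖ ^ 2) = ‖v‖ / R := by
    rw [hφder.fderiv]
    simp [φ, hℓv, abs_of_pos hR0, div_eq_inv_mul]
  rw [← div_le_iff₀' hR0, ← hval]
  exact le_caratheodoryMetric hD hz hφ v

theorem mul_caratheodoryMetric_fderiv_le (hD : IsOpen D) {f : F → F}
    (hf : DifferentiableOn ℂ f D) (hfD : MapsTo f D D) {R ε : ℝ}
    (hR : ∀ x ∈ D, D ⊆ ball x R) (hε : 0 < ε) (hball : ∀ u ∈ D, ball (f u) ε ⊆ D)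
    (hz : z ∈ D) (v : F) :
    (1 + ε / R) * caratheodoryMetric D (f z) (fderiv ℂ f z v) ≤ caratheodoryMetric D z v := by
  have hR0 : 0 < R := pos_of_mem_ball (hR z hz hz)
  set c := ε / R
  have hc : 0 < c := div_pos hε hR0
  set g : F → F := fun u => f u + (c : ℂ) • (f u - f z)
  have hgD : MapsTo g D D := fun u hu => hball u hu <| by
    rw [mem_ball, dist_eq_norm, add_sub_cancel_left, norm_smul, norm_real,
      Real.norm_of_nonneg hc.le]
    calc c * ‖f u - f z‖ < c * R := by
          gcongr; rw [← dist_eq_norm]; exact hR _ (hfD hz) (hfD hu)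
      _ = ε := div_mul_cancel₀ ε hR0.ne'
  have hg : DifferentiableOn ℂ g D := hf.add ((hf.sub_const _).const_smul _)
  have hfz : HasFDerivAt f (fderiv ℂ f z) z :=
    ((hf z hz).differentiableAt (hD.mem_nhds hz)).hasFDerivAt
  have hgder : fderiv ℂ g z v = ((1 + c : ℝ) : ℂ) • fderiv ℂ f z v := by
    have : HasFDerivAt g (fderiv ℂ f z + (c : ℂ) • fderiv ℂ f z) z :=
      hfz.add ((hfz.sub_const (f z)).const_smul (c : ℂ))
    rw [this.fderiv]
    simp [add_smul]
  have hgz : g z = f z := by simp [g]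
  calc (1 + c) * caratheodoryMetric D (f z) (fderiv ℂ f z v)
      = caratheodoryMetric D (g z) (fderiv ℂ g z v) := by
        rw [hgder, hgz, caratheodoryMetric_smul, norm_real, Real.norm_of_nonneg (by positivity)]
    _ ≤ caratheodoryMetric D z v := caratheodoryMetric_fderiv_le hD hg hgD hz v

end CaratheodoryMetric

section Regularity

variable {E F : Type*} [NormedAddCommGroup E] [NormedSpace ℂ E] [NormedAddCommGroup F]
  [NormedSpace ℂ F] {f : E → F} {D : Set E}

/-- Schwarz lemma applied to the difference `u ↦ f (u + (z - z₀)) - f u`. -/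
theorem norm_fderiv_sub_fderiv_le (hf : DifferentiableOn ℂ f D) {z₀ z : E} {ρ η : ℝ}
    (hρ : 0 < ρ) (hz₀ : ball z₀ ρ ⊆ D) (hz : ball z ρ ⊆ D)
    (hη : ∀ u ∈ ball z₀ ρ, ‖f (u + (z - z₀)) - f u‖ ≤ η) :
    ‖fderiv ℂ f z - fderiv ℂ f z₀‖ ≤ 2 * η / ρ := by
  set h : E → F := fun u => f (u + (z - z₀)) - f u
  have htrans : ∀ u ∈ ball z₀ ρ, u + (z - z₀) ∈ ball z ρ := fun u hu => by
    rwa [mem_ball, dist_eq_norm, show u + (z - z₀) - z = u - z₀ by abel, ← dist_eq_norm]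
  have hfat : ∀ u ∈ ball z ρ, DifferentiableAt ℂ f u := fun u hu =>
    (hf u (hz hu)).differentiableAt (mem_of_superset (isOpen_ball.mem_nhds hu) hz)
  have hh : DifferentiableOn ℂ h (ball z₀ ρ) := fun u hu =>
    (((differentiableAt_comp_add_right _).2 (hfat _ (htrans u hu))).sub
      ((hf u (hz₀ hu)).differentiableAt (mem_of_superset (isOpen_ball.mem_nhds hu) hz₀)))
      |>.differentiableWithinAt
  have hmaps : MapsTo h (ball z₀ ρ) (closedBall (h z₀) (2 * η)) := fun u hu => by
    rw [mem_closedBall, dist_eq_norm]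
    linarith [norm_sub_le (h u) (h z₀), hη u hu, hη z₀ (mem_ball_self hρ)]
  have hder : fderiv ℂ h z₀ = fderiv ℂ f z - fderiv ℂ f z₀ := by
    have hz' : z₀ + (z - z₀) = z := by abel
    have hfz : HasFDerivAt f (fderiv ℂ f z) (z₀ + (z - z₀)) :=
      by rw [hz']; exact (hfat z (mem_ball_self hρ)).hasFDerivAt
    exact (((hasFDerivAt_comp_add_right (z - z₀)).2 hfz).sub
      ((hf z₀ (hz₀ (mem_ball_self hρ))).differentiableAt
        (mem_of_superset (isOpen_ball.mem_nhds (mem_ball_self hρ)) hz₀)).hasFDerivAt).fderiv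
  rw [← hder]
  exact Complex.norm_fderiv_le_div_of_mapsTo_ball hh hmaps hρ

theorem DifferentiableOn.continuousOn_fderiv_of_isOpen [ProperSpace E]
    (hf : DifferentiableOn ℂ f D) (hD : IsOpen D) : ContinuousOn (fderiv ℂ f) D := by
  refine Metric.continuousOn_iff.2 fun z₀ hz₀ ε hε => ?_
  obtain ⟨r, hr, hrD⟩ := Metric.isOpen_iff.1 hD z₀ hz₀
  obtain ⟨ρ, hρ, hK⟩ : ∃ ρ > 0, closedBall z₀ (2 * ρ) ⊆ D :=
    ⟨r / 3, by positivity, (closedBall_subset_ball (by linarith)).trans hrD⟩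
  obtain ⟨δ, hδ, hfδ⟩ := Metric.uniformContinuousOn_iff_le.1
    ((isCompact_closedBall z₀ _).uniformContinuousOn_of_continuous (hf.continuousOn.mono hK))
    (ε * ρ / 4) (by positivity)
  refine ⟨min δ ρ, lt_min hδ hρ, fun z _ hz => ?_⟩
  rw [dist_eq_norm, lt_min_iff] at hz
  have hball₀ : ball z₀ ρ ⊆ closedBall z₀ (2 * ρ) :=
    ball_subset_ball (by linarith) |>.trans ball_subset_closedBall
  have hball : ball z ρ ⊆ closedBall z₀ (2 * ρ) := fun u hu => by
    rw [mem_closedBall_iff_norm, ← sub_add_sub_cancel u z z₀]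
    linarith [norm_add_le (u - z) (z - z₀), mem_ball_iff_norm.1 hu]
  have hη : ∀ u ∈ ball z₀ ρ, ‖f (u + (z - z₀)) - f u‖ ≤ ε * ρ / 4 := fun u hu => by
    have hu' : u + (z - z₀) ∈ closedBall z₀ (2 * ρ) := by
      rw [mem_closedBall_iff_norm, show u + (z - z₀) - z₀ = (u - z₀) + (z - z₀) by abel]
      linarith [norm_add_le (u - z₀) (z - z₀), mem_ball_iff_norm.1 hu]
    rw [← dist_eq_norm]
    refine hfδ _ hu' _ (hball₀ hu) ?_
    rw [dist_eq_norm, add_sub_cancel_left]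
    exact hz.1.le
  rw [dist_eq_norm]
  calc ‖fderiv ℂ f z - fderiv ℂ f z₀‖ ≤ 2 * (ε * ρ / 4) / ρ :=
        norm_fderiv_sub_fderiv_le hf hρ (hball₀.trans hK) (hball.trans hK) hη
    _ < ε := by field_simp; linarith

theorem DifferentiableOn.contDiffOn_one_of_isOpen [ProperSpace E] (hf : DifferentiableOn ℂ f D)
    (hD : IsOpen D) : ContDiffOn ℂ 1 f D :=
  (contDiffOn_succ_iff_fderiv_of_isOpen (n := 0) hD).2
    ⟨hf, by simp, contDiffOn_zero.2 (hf.continuousOn_fderiv_of_isOpen hD)⟩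

end Regularity

theorem IsCompact.exists_forall_ball_subset {X : Type*} [PseudoMetricSpace X] {K U : Set X}
    (hK : IsCompact K) (hU : IsOpen U) (hKU : K ⊆ U) : ∃ δ > 0, ∀ x ∈ K, ball x δ ⊆ U := by
  obtain ⟨δ, hδ, hδU⟩ := hK.exists_thickening_subset_open hU hKU
  exact ⟨δ, hδ, fun x hx => (ball_subset_thickening hx δ).trans hδU⟩

theorem ae_restrict_Icc_mem_Ioo (a b : ℝ) : ∀ᵐ t ∂volume.restrict (Icc a b), t ∈ Ioo a b := by
  rw [← restrict_Ioo_eq_restrict_Icc]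
  exact self_mem_ae_restrict measurableSet_Ioo

section Integrability

variable {F : Type*} [NormedAddCommGroup F] [NormedSpace ℂ F] [ProperSpace F] {D : Set F}

theorem lowerSemicontinuousOn_caratheodoryMetric (hD : IsOpen D) :
    LowerSemicontinuousOn (fun p : F × F => caratheodoryMetric D p.1 p.2) (D ×ˢ univ) := by
  simp_rw [caratheodoryMetric_eq_iSup]
  refine lowerSemicontinuousOn_ciSup (fun p hp => bddAbove_range_caratheodoryFamily hD hp.1 p.2)
    fun φ => ContinuousOn.lowerSemicontinuousOn ?_
  have hφ : ContinuousOn φ.1 D := φ.2.1.continuousOn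
  refine ContinuousOn.div ?_ ?_ fun p hp => (one_sub_sq_norm_pos_of_mapsTo φ.2.2 hp.1).ne'
  · exact (((φ.2.1.continuousOn_fderiv_of_isOpen hD).comp continuousOn_fst
      fun p hp => hp.1).clm_apply continuousOn_snd).norm
  · exact continuousOn_const.sub ((hφ.comp continuousOn_fst fun p hp => hp.1).norm.pow 2)

theorem intervalIntegrable_caratheodoryMetric (hD : IsOpen D) {γ : ℝ → F}
    (hγ : ContDiffOn ℝ 1 γ (Icc 0 1)) (hγD : MapsTo γ (Icc 0 1) D) :
    IntervalIntegrable (fun t => caratheodoryMetric D (γ t) (deriv γ t)) volume 0 1 := by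
  set w := derivWithin γ (Icc 0 1)
  have hw : ContinuousOn w (Icc 0 1) :=
    hγ.continuousOn_derivWithin (uniqueDiffOn_Icc zero_lt_one) le_rfl
  obtain ⟨C, hC⟩ := isCompact_Icc.exists_bound_of_continuousOn hw
  obtain ⟨ρ, hρ, hρD⟩ := (isCompact_Icc.image_of_continuousOn hγ.continuousOn)
    |>.exists_forall_ball_subset hD (image_subset_iff.2 hγD)
  have hIoo : ∀ᵐ t ∂volume.restrict (Ι (0 : ℝ) 1), t ∈ Ioo 0 1 := by
    rw [uIoc_of_le zero_le_one, restrict_Ioc_eq_restrict_Icc]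
    exact ae_restrict_Icc_mem_Ioo 0 1
  have hderiv : ∀ t ∈ Ioo (0 : ℝ) 1, deriv γ t = w t := fun t ht =>
    (derivWithin_of_mem_nhds (Icc_mem_nhds ht.1 ht.2)).symm
  -- clamp `t` to `[0, 1]`, so that the integrand becomes lower semicontinuous on all of `ℝ`
  set s : ℝ → ℝ := fun t => projIcc 0 1 zero_le_one t
  have hs : Continuous s := continuous_subtype_val.comp continuous_projIcc
  have hs01 : ∀ t, s t ∈ Icc 0 1 := fun t => (projIcc _ _ _ t).2
  have hst : ∀ t ∈ Icc (0 : ℝ) 1, s t = t := fun t ht => by simp [s, projIcc_of_mem _ ht]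
  have hlsc : LowerSemicontinuous fun t => caratheodoryMetric D (γ (s t)) (w (s t)) :=
    lowerSemicontinuousOn_univ_iff.1 <| (lowerSemicontinuousOn_caratheodoryMetric hD).comp
      (g := fun t => (γ (s t), w (s t)))
      ((hγ.continuousOn.comp_continuous hs hs01).prodMk
        (hw.comp_continuous hs hs01)).continuousOn
      fun t _ => ⟨hγD (hs01 t), trivial⟩
  refine (intervalIntegrable_const (c := C / ρ)).mono_fun' ?_ ?_
  · refine hlsc.measurable.aestronglyMeasurable.congr ?_
    filter_upwards [hIoo] with t ht
    rw [hst t (Ioo_subset_Icc_self ht), hderiv t ht]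
  · filter_upwards [hIoo] with t ht
    have htD : ball (γ t) ρ ⊆ D := hρD _ (mem_image_of_mem γ (Ioo_subset_Icc_self ht))
    rw [Real.norm_of_nonneg (caratheodoryMetric_nonneg (htD (mem_ball_self hρ)) _), hderiv t ht]
    exact (caratheodoryMetric_le_of_ball_subset hρ htD _).trans
      (div_le_div_of_nonneg_right (hC t (Ioo_subset_Icc_self ht)) hρ.le)

end Integrability

section Paths

variable {E : Type*} [NormedAddCommGroup E] [NormedSpace ℝ E] {D : Set E} {z w w' : E}

def ContDiffJoinedIn (D : Set E) (z w : E) : Prop :=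
  ∃ γ : ℝ → E, ContDiffOn ℝ 1 γ (Icc 0 1) ∧ MapsTo γ (Icc 0 1) D ∧ γ 0 = z ∧ γ 1 = w

theorem ContDiffJoinedIn.of_segment_subset (h : ContDiffJoinedIn D z w)
    (hseg : segment ℝ w w' ⊆ D) : ContDiffJoinedIn D z w' := by
  obtain ⟨γ, hγ, hγD, rfl, rfl⟩ := h
  -- run through `γ` on `[0, 1/2]` and then along the segment, reparametrized to be flat at `1/2`
  have hs : ContDiff ℝ 1 Real.smoothTransition := Real.smoothTransition.contDiff
  have hs01 : ∀ t, Real.smoothTransition t ∈ Icc 0 1 := fun t =>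
    ⟨Real.smoothTransition.nonneg t, Real.smoothTransition.le_one t⟩
  refine ⟨fun t => γ (Real.smoothTransition (2 * t)) +
    Real.smoothTransition (2 * t - 1) • (w' - γ 1), ?_, fun t _ => ?_, ?_, ?_⟩
  · exact (hγ.comp (hs.comp (contDiff_const.mul contDiff_id)).contDiffOn fun t _ => hs01 _).add
      ((hs.comp ((contDiff_const.mul contDiff_id).sub contDiff_const)).smul
        contDiff_const).contDiffOn
  · rcases le_or_gt t (1 / 2) with ht | ht
    · simp only [Real.smoothTransition.zero_of_nonpos (by linarith : 2 * t - 1 ≤ 0), zero_smul,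
        add_zero]
      exact hγD (hs01 _)
    · simp only [Real.smoothTransition.one_of_one_le (by linarith : 1 ≤ 2 * t)]
      rw [segment_eq_image'] at hseg
      exact hseg (mem_image_of_mem _ (hs01 _))
  · norm_num [Real.smoothTransition.zero_of_nonpos]
  · norm_num [Real.smoothTransition.one_of_one_le]

theorem IsPreconnected.contDiffJoinedIn (hDc : IsPreconnected D) (hD : IsOpen D) (hz : z ∈ D)
    (hw : w ∈ D) : ContDiffJoinedIn D z w := by
  set J := {x | ContDiffJoinedIn D z x}
  have hJD : J ⊆ D := fun x ⟨γ, _, hγD, _, hγ1⟩ => hγ1 ▸ hγD (right_mem_Icc.2 zero_le_one)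
  have hball : ∀ x ∈ D, ∃ r > 0, ball x r ⊆ D ∧ ∀ y ∈ ball x r, segment ℝ x y ⊆ D :=
    fun x hx => by
      obtain ⟨r, hr, hrD⟩ := Metric.isOpen_iff.1 hD x hx
      exact ⟨r, hr, hrD, fun y hy =>
        ((convex_ball x r).segment_subset (mem_ball_self hr) hy).trans hrD⟩
  have hJ : IsOpen J := Metric.isOpen_iff.2 fun x hx => by
    obtain ⟨r, hr, -, hseg⟩ := hball x (hJD hx)
    exact ⟨r, hr, fun y hy => hx.of_segment_subset (hseg y hy)⟩
  have hDJ : IsOpen (D \ J) := Metric.isOpen_iff.2 fun x hx => by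
    obtain ⟨r, hr, hrD, hseg⟩ := hball x hx.1
    exact ⟨r, hr, fun y hy => ⟨hrD hy, fun hyJ => hx.2 (hyJ.of_segment_subset
      (segment_symm ℝ x y ▸ hseg y hy))⟩⟩
  have hzJ : z ∈ J := ⟨fun _ => z, contDiffOn_const, fun _ _ => hz, rfl, rfl⟩
  exact hDc.subset_left_of_subset_union hJ hDJ disjoint_sdiff_right
    (fun x hx => by by_cases hxJ : x ∈ J <;> simp [hxJ, hx]) ⟨z, hz, hzJ⟩ hw

end Paths

section IntegratedDistance

variable {F : Type*} [NormedAddCommGroup F] [NormedSpace ℂ F] {D : Set F} {z w : F}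

theorem caratheodoryIntDist_le_integral {γ : ℝ → F} (hγ : ContDiffOn ℝ 1 γ (Icc 0 1))
    (hγD : MapsTo γ (Icc 0 1) D) :
    caratheodoryIntDist D (γ 0) (γ 1) ≤ ∫ t in (0 : ℝ)..1, caratheodoryMetric D (γ t) (deriv γ t) :=
  csInf_le ⟨0, by
    rintro _ ⟨γ, -, hγD, -, -, rfl⟩
    exact intervalIntegral.integral_nonneg zero_le_one fun t ht =>
      caratheodoryMetric_nonneg (hγD ht) _⟩ ⟨γ, hγ, hγD, rfl, rfl, rfl⟩

theorem le_mul_caratheodoryIntDist (hzw : ContDiffJoinedIn D z w) {k C : ℝ} (hk : 0 ≤ k)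
    (h : ∀ γ : ℝ → F, ContDiffOn ℝ 1 γ (Icc 0 1) → MapsTo γ (Icc 0 1) D → γ 0 = z → γ 1 = w →
      C ≤ k * ∫ t in (0 : ℝ)..1, caratheodoryMetric D (γ t) (deriv γ t)) :
    C ≤ k * caratheodoryIntDist D z w := by
  obtain ⟨γ, hγ, hγD, hγ0, hγ1⟩ := hzw
  rw [caratheodoryIntDist, ← smul_eq_mul, ← Real.sInf_smul_of_nonneg hk]
  refine le_csInf ⟨_, ⟨_, ⟨γ, hγ, hγD, hγ0, hγ1, rfl⟩, rfl⟩⟩ ?_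
  rintro _ ⟨_, ⟨γ, hγ, hγD, hγ0, hγ1, rfl⟩, rfl⟩
  exact h γ hγ hγD hγ0 hγ1

variable [ProperSpace F]

theorem norm_sub_le_mul_caratheodoryIntDist (hD : IsOpen D) (hDc : IsPreconnected D) {R : ℝ}
    (hR : ∀ x ∈ D, D ⊆ ball x R) (hz : z ∈ D) (hw : w ∈ D) :
    ‖w - z‖ ≤ R * caratheodoryIntDist D z w := by
  refine le_mul_caratheodoryIntDist (hDc.contDiffJoinedIn hD hz hw) 
    (pos_of_mem_ball (hR z hz hz)).le ?_
  rintro γ hγ hγD rfl rfl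
  rw [← intervalIntegral.integral_deriv_of_contDiffOn_Icc hγ zero_le_one,
    ← intervalIntegral.integral_const_mul]
  refine intervalIntegral.norm_integral_le_of_norm_le zero_le_one ?_
    ((intervalIntegrable_caratheodoryMetric hD hγ hγD).const_mul R)
  rw [← ae_restrict_iff' measurableSet_Ioc, restrict_Ioc_eq_restrict_Icc]
  filter_upwards [ae_restrict_Icc_mem_Ioo 0 1] with t ht
  have htD := hγD (Ioo_subset_Icc_self ht)
  exact norm_le_mul_caratheodoryMetric hD htD (hR _ htD) _

theorem caratheodoryIntDist_le_mul (hD : IsOpen D) (hDc : IsPreconnected D) {f : F → F}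
    (hf : DifferentiableOn ℂ f D) (hfD : MapsTo f D D) {k : ℝ} (hk : 0 ≤ k)
    (hfk : ∀ z ∈ D, ∀ v, caratheodoryMetric D (f z) (fderiv ℂ f z v) ≤
      k * caratheodoryMetric D z v)
    (hz : z ∈ D) (hw : w ∈ D) :
    caratheodoryIntDist D (f z) (f w) ≤ k * caratheodoryIntDist D z w := by
  refine le_mul_caratheodoryIntDist (hDc.contDiffJoinedIn hD hz hw) hk ?_
  rintro γ hγ hγD rfl rfl
  have hfγ : ContDiffOn ℝ 1 (f ∘ γ) (Icc 0 1) :=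
    ((hf.contDiffOn_one_of_isOpen hD).restrict_scalars ℝ).comp hγ hγD
  have hderiv : ∀ t ∈ Ioo (0 : ℝ) 1, deriv (f ∘ γ) t = fderiv ℂ f (γ t) (deriv γ t) :=
    fun t ht => by
      have hγt := (hγ.differentiableOn one_ne_zero t (Ioo_subset_Icc_self ht)).differentiableAt
        (Icc_mem_nhds ht.1 ht.2)
      have hft := (hf _ (hγD (Ioo_subset_Icc_self ht))).differentiableAt
        (hD.mem_nhds (hγD (Ioo_subset_Icc_self ht)))
      exact (hft.hasFDerivAt.restrictScalars ℝ |>.comp_hasDerivAt t hγt.hasDerivAt).deriv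
  calc caratheodoryIntDist D ((f ∘ γ) 0) ((f ∘ γ) 1)
      ≤ ∫ t in (0 : ℝ)..1, caratheodoryMetric D ((f ∘ γ) t) (deriv (f ∘ γ) t) :=
        caratheodoryIntDist_le_integral hfγ (hfD.comp hγD)
    _ ≤ ∫ t in (0 : ℝ)..1, k * caratheodoryMetric D (γ t) (deriv γ t) := by
        refine intervalIntegral.integral_mono_ae_restrict zero_le_one
          (intervalIntegrable_caratheodoryMetric hD hfγ (hfD.comp hγD))
          ((intervalIntegrable_caratheodoryMetric hD hγ hγD).const_mul k) ?_
        filter_upwards [ae_restrict_Icc_mem_Ioo 0 1] with t ht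
        rw [hderiv t ht]
        exact hfk _ (hγD (Ioo_subset_Icc_self ht)) _
    _ = k * ∫ t in (0 : ℝ)..1, caratheodoryMetric D (γ t) (deriv γ t) :=
        intervalIntegral.integral_const_mul k _

end IntegratedDistance

section FixedPoint

variable {X : Type*} [MetricSpace X] {D : Set X} {f : X → X} {d : X → X → ℝ} {k C : ℝ}

theorem cauchySeq_iterate_of_contracting (hfD : MapsTo f D D) (hk : 0 ≤ k) (hk1 : k < 1)
    (hC : 0 ≤ C) (hfk : ∀ x ∈ D, ∀ y ∈ D, d (f x) (f y) ≤ k * d x y)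
    (hdist : ∀ x ∈ D, ∀ y ∈ D, dist x y ≤ C * d x y) {z : X} (hz : z ∈ D) :
    CauchySeq fun m => f^[m] z := by
  have hmem : ∀ m, f^[m] z ∈ D := fun m => hfD.iterate m hz
  have hstep : ∀ m, d (f^[m] z) (f^[m + 1] z) ≤ k ^ m * d z (f z) := by
    intro m
    induction m with
    | zero => simp
    | succ m ih =>
      rw [Function.iterate_succ_apply' f m, Function.iterate_succ_apply' f (m + 1), pow_succ',
        mul_assoc]
      exact (hfk _ (hmem m) _ (hmem (m + 1))).trans (mul_le_mul_of_nonneg_left ih hk)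
  refine cauchySeq_of_le_geometric k (C * d z (f z)) hk1 fun m => ?_
  calc dist (f^[m] z) (f^[m + 1] z) ≤ C * d (f^[m] z) (f^[m + 1] z) :=
        hdist _ (hmem m) _ (hmem (m + 1))
    _ ≤ C * d z (f z) * k ^ m := by rw [mul_assoc, mul_comm (d z _)]; gcongr; exact hstep m

theorem eq_of_contracting_of_fixed (hk1 : k < 1) (hC : 0 ≤ C)
    (hfk : ∀ x ∈ D, ∀ y ∈ D, d (f x) (f y) ≤ k * d x y)
    (hdist : ∀ x ∈ D, ∀ y ∈ D, dist x y ≤ C * d x y) {a b : X} (ha : a ∈ D) (hb : b ∈ D)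
    (hfa : f a = a) (hfb : f b = b) : a = b := by
  have hab : d a b ≤ 0 := by nlinarith [hfa ▸ hfb ▸ hfk a ha b hb]
  exact dist_le_zero.1 ((hdist a ha b hb).trans (mul_nonpos_of_nonneg_of_nonpos hC hab))

theorem exists_fixedPoint_of_contracting [CompleteSpace X] (hDne : D.Nonempty)
    (hfc : ContinuousOn f D) (hsub : closure (f '' D) ⊆ D) (hk : 0 ≤ k) (hk1 : k < 1)
    (hC : 0 ≤ C) (hfk : ∀ x ∈ D, ∀ y ∈ D, d (f x) (f y) ≤ k * d x y)
    (hdist : ∀ x ∈ D, ∀ y ∈ D, dist x y ≤ C * d x y) :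
    ∃ a ∈ D, f a = a ∧ (∀ b ∈ D, f b = b → b = a) ∧
      ∀ z ∈ D, Tendsto (fun m => f^[m] z) atTop (𝓝 a) := by
  have hfD : MapsTo f D D := fun x hx => hsub (subset_closure (mem_image_of_mem f hx))
  have hlim : ∀ z ∈ D, ∃ a ∈ D, f a = a ∧ Tendsto (fun m => f^[m] z) atTop (𝓝 a) := by
    intro z hz
    obtain ⟨a, ha⟩ := cauchySeq_tendsto_of_complete
      (cauchySeq_iterate_of_contracting hfD hk hk1 hC hfk hdist hz)
    have hsucc : Tendsto (fun m => f (f^[m] z)) atTop (𝓝 a) := by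
      simpa only [Function.comp_def, Function.iterate_succ_apply'] using
        ha.comp (tendsto_add_atTop_nat 1)
    have haD : a ∈ D := hsub <| isClosed_closure.mem_of_tendsto hsucc <|
      Eventually.of_forall fun m => subset_closure (mem_image_of_mem f (hfD.iterate m hz))
    have hfa : f a = a := tendsto_nhds_unique ((hfc a haD).tendsto.comp
      (tendsto_nhdsWithin_iff.2 ⟨ha, Eventually.of_forall fun m => hfD.iterate m hz⟩)) hsucc
    exact ⟨a, haD, hfa, ha⟩
  obtain ⟨z₀, hz₀⟩ := hDne
  obtain ⟨a, haD, hfa, -⟩ := hlim z₀ hz₀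
  have huniq : ∀ b ∈ D, f b = b → b = a := fun b hb hfb =>
    eq_of_contracting_of_fixed hk1 hC hfk hdist hb haD hfb hfa
  refine ⟨a, haD, hfa, huniq, fun z hz => ?_⟩
  obtain ⟨b, hbD, hfb, hb⟩ := hlim z hz
  rwa [huniq b hbD hfb] at hb

end FixedPoint

/-- Earle–Hamilton fixed point theorem. -/
theorem earle_hamilton
    {n : ℕ} (D : Set (Fin n → ℂ)) (hD : IsOpen D) (hDconn : IsConnected D)
    (hDbdd : Bornology.IsBounded D)
    (f : (Fin n → ℂ) → (Fin n → ℂ))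
    (hf : DifferentiableOn ℂ f D) (hfm : MapsTo f D D)
    (hcp : IsCompact (closure (f '' D))) (hsub : closure (f '' D) ⊆ D) :
    (∃ k : ℝ, k < 1 ∧ ∀ z ∈ D, ∀ w ∈ D,
        caratheodoryIntDist D (f z) (f w) ≤ k * caratheodoryIntDist D z w) ∧
    ∃ a ∈ D, f a = a ∧ (∀ b ∈ D, f b = b → b = a) ∧
      ∀ z₀ ∈ D, Tendsto (fun m => f^[m] z₀) atTop (nhds a) := by
  obtain ⟨ε, hε, hεD⟩ := hcp.exists_forall_ball_subset hD hsub
  have hball : ∀ u ∈ D, ball (f u) ε ⊆ D := fun u hu =>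
    hεD _ (subset_closure (mem_image_of_mem f hu))
  set R := diam D + 1
  have hR0 : 0 < R := by positivity
  have hR : ∀ x ∈ D, D ⊆ ball x R := fun x hx y hy => by
    rw [mem_ball]; linarith [dist_le_diam_of_mem hDbdd hy hx]
  set k := (1 + ε / R)⁻¹
  have hk0 : 0 < k := by positivity
  have hk1 : k < 1 := inv_lt_one_of_one_lt₀ (by linarith [div_pos hε hR0])
  have hfk : ∀ z ∈ D, ∀ v, caratheodoryMetric D (f z) (fderiv ℂ f z v) ≤
      k * caratheodoryMetric D z v := fun z hz v => by
    rw [← div_eq_inv_mul, le_div_iff₀' (by positivity)]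
    exact mul_caratheodoryMetric_fderiv_le hD hf hfm hR hε hball hz v
  have hLip : ∀ z ∈ D, ∀ w ∈ D,
      caratheodoryIntDist D (f z) (f w) ≤ k * caratheodoryIntDist D z w := fun z hz w hw =>
    caratheodoryIntDist_le_mul hD hDconn.isPreconnected hf hfm hk0.le hfk hz hw
  refine ⟨⟨k, hk1, hLip⟩, exists_fixedPoint_of_contracting hDconn.nonempty hf.continuousOn hsub
    hk0.le hk1 hR0.le hLip fun z hz w hw => ?_⟩
  rw [dist_comm, dist_eq_norm]
  exact norm_sub_le_mul_caratheodoryIntDist hD hDconn.isPreconnected hR hz hw
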